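/- Let N ≥ 1 be an integer and let ρ > N, C₀ > 0, r₀ > 0. Then there exists a constant C > 0, depending only on N, ρ, C₀ and r₀, with the following property: for every z ∈ ℝ^N, every measurable g : ℝ^N → ℝ with 0 ≤ g(x) ≤ 1 for all x and with g(x) ≥ 1 − C₀|x − z|^ρ whenever |x − z| ≤ r₀/2, every measurable h : ℝ^N → ℝ with 0 ≤ h ≤ 1 and h(x) = 1 whenever |x| ≤ r₀/2, and every ε ∈ (0,1], one has 0 ≤ ∫_{ℝ^N} (1 − g(x) h(x − z)) · ε^N / (ε² + |x − z|²)^N dx ≤ C ε^N. -/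

import Mathlib

/-!
Put `t = ‖x - z‖`. Since `ε² + t² ≥ t²`, the integrand is at most `(1 - g(x) h(x - z)) ε^N t^(-2N)`.
For `t ≤ r₀/2` the cutoff equals `1` and `1 - g(x) ≤ C₀ t^ρ`, which gives `C₀ ε^N t^(ρ - 2N)`,
integrable near `0` because `ρ > N`; farther out the numerator is at most `1` and `t^(-2N)` is
integrable at infinity because `2N > N`. So the integrand is at most `ε^N` times one fixed
integrable radial function, whose integral (plus one) is the constant `C`.
-/

open MeasureTheory Set Module

lemma rpow_natCast_sub_one_mul_rpow {t : ℝ} (ht : 0 < t) {d : ℕ} (hd : 1 ≤ d) (a : ℝ) :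
    t ^ (d - 1) * t ^ a = t ^ (a + d - 1) := by
  rw [← Real.rpow_natCast, ← Real.rpow_add ht, Nat.cast_sub hd, Nat.cast_one]
  ring_nf

theorem integrable_ite_norm_le_rpow {E : Type*} [NormedAddCommGroup E] [NormedSpace ℝ E]
    [FiniteDimensional ℝ E] [MeasurableSpace E] [BorelSpace E] [Nontrivial E]
    (μ : Measure E) [μ.IsAddHaarMeasure] {a b R : ℝ} (c : ℝ)
    (ha : -(finrank ℝ E : ℝ) < a) (hb : b < -(finrank ℝ E : ℝ)) (hR : 0 < R) :
    Integrable (fun y : E => if ‖y‖ ≤ R then c * ‖y‖ ^ a else ‖y‖ ^ b) μ := by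
  have hd : 1 ≤ finrank ℝ E := finrank_pos
  refine (integrable_fun_norm_addHaar μ (f := fun t => if t ≤ R then c * t ^ a else t ^ b)).2 ?_
  rw [← Ioc_union_Ioi_eq_Ioi hR.le]
  refine IntegrableOn.union ?_ ?_
  · have h : IntegrableOn (fun t : ℝ => c * t ^ (a + finrank ℝ E - 1)) (Ioc 0 R) := by
      refine Integrable.const_mul ?_ c
      rw [← IntegrableOn, integrableOn_Ioc_iff_integrableOn_Ioo,
        intervalIntegral.integrableOn_Ioo_rpow_iff hR]
      linarith
    refine h.congr_fun (fun t ht => ?_) measurableSet_Ioc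
    simp only [smul_eq_mul, if_pos ht.2]
    rw [mul_left_comm, rpow_natCast_sub_one_mul_rpow ht.1 hd]
  · have h : IntegrableOn (fun t : ℝ => t ^ (b + finrank ℝ E - 1)) (Ioi R) :=
      integrableOn_Ioi_rpow_of_lt (by linarith) hR
    refine h.congr_fun (fun t ht => ?_) measurableSet_Ioi
    simp only [smul_eq_mul, if_neg (not_le.2 (mem_Ioi.1 ht))]
    rw [rpow_natCast_sub_one_mul_rpow (hR.trans ht) hd]

lemma div_add_sq_pow_le_mul_rpow_neg {ε t : ℝ} (hε : 0 ≤ ε) (ht : 0 < t) (N : ℕ) :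
    ε ^ N / (ε ^ 2 + t ^ 2) ^ N ≤ ε ^ N * t ^ (-(2 * N : ℝ)) := by
  have h2N : t ^ (-(2 * N : ℝ)) = ((t ^ 2) ^ N)⁻¹ := by
    rw [Real.rpow_neg ht.le, ← pow_mul, ← Real.rpow_natCast]
    push_cast
    rfl
  rw [h2N, ← div_eq_mul_inv]
  gcongr
  linarith [sq_nonneg ε]

noncomputable def bubbleMajorant (C₀ ρ R : ℝ) (N : ℕ) (t : ℝ) : ℝ :=
  if t ≤ R then C₀ * t ^ (ρ - 2 * N) else t ^ (-(2 * N : ℝ))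

lemma bubbleMajorant_nonneg {C₀ ρ R t : ℝ} (N : ℕ) (hC₀ : 0 ≤ C₀) (ht : 0 ≤ t) :
    0 ≤ bubbleMajorant C₀ ρ R N t := by
  unfold bubbleMajorant
  split_ifs <;> positivity

lemma mul_div_add_sq_pow_le_bubbleMajorant {n ε t C₀ ρ R : ℝ} (N : ℕ) (hε : 0 ≤ ε) (ht : 0 < t)
    (hn₀ : 0 ≤ n) (hn₁ : n ≤ 1) (hnR : t ≤ R → n ≤ C₀ * t ^ ρ) :
    n * ε ^ N / (ε ^ 2 + t ^ 2) ^ N ≤ ε ^ N * bubbleMajorant C₀ ρ R N t := by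
  have hbubble := div_add_sq_pow_le_mul_rpow_neg hε ht N
  rw [mul_div_assoc]
  unfold bubbleMajorant
  split_ifs with htR
  · calc n * (ε ^ N / (ε ^ 2 + t ^ 2) ^ N) ≤ C₀ * t ^ ρ * (ε ^ N * t ^ (-(2 * N : ℝ))) :=
          mul_le_mul (hnR htR) hbubble (by positivity) (hn₀.trans (hnR htR))
      _ = ε ^ N * (C₀ * t ^ (ρ - 2 * N)) := by
          rw [sub_eq_add_neg, Real.rpow_add ht]
          ring
  · calc n * (ε ^ N / (ε ^ 2 + t ^ 2) ^ N) ≤ 1 * (ε ^ N * t ^ (-(2 * N : ℝ))) := by gcongr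
      _ = _ := one_mul _

theorem bubble_energy_estimate (N : ℕ) (hN : 1 ≤ N) (ρ C₀ r₀ : ℝ)
    (hρ : (N : ℝ) < ρ) (hC₀ : 0 < C₀) (hr₀ : 0 < r₀) :
    ∃ C : ℝ, 0 < C ∧
      ∀ (z : EuclideanSpace ℝ (Fin N)) (g h : EuclideanSpace ℝ (Fin N) → ℝ),
        Measurable g → (∀ x, 0 ≤ g x ∧ g x ≤ 1) →
        (∀ x, ‖x - z‖ ≤ r₀ / 2 → 1 - C₀ * ‖x - z‖ ^ ρ ≤ g x) →
        Measurable h → (∀ x, 0 ≤ h x ∧ h x ≤ 1) →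
        (∀ x, ‖x‖ ≤ r₀ / 2 → h x = 1) →
        ∀ ε : ℝ, 0 < ε → ε ≤ 1 →
          0 ≤ (∫ x, (1 - g x * h (x - z)) * ε ^ N / (ε ^ 2 + ‖x - z‖ ^ 2) ^ N) ∧
          (∫ x, (1 - g x * h (x - z)) * ε ^ N / (ε ^ 2 + ‖x - z‖ ^ 2) ^ N) ≤ C * ε ^ N := by
  have : Nonempty (Fin N) := ⟨⟨0, hN⟩⟩
  have hN' : (1 : ℝ) ≤ N := by exact_mod_cast hN
  set K : EuclideanSpace ℝ (Fin N) → ℝ := fun y => bubbleMajorant C₀ ρ (r₀ / 2) N ‖y‖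
  have hK : Integrable K := integrable_ite_norm_le_rpow volume C₀
    (by rw [finrank_euclideanSpace_fin]; linarith) (by rw [finrank_euclideanSpace_fin]; linarith)
    (by positivity)
  have hK₀ : 0 ≤ ∫ y, K y :=
    integral_nonneg fun y => bubbleMajorant_nonneg N hC₀.le (norm_nonneg y)
  refine ⟨(∫ y, K y) + 1, by positivity, ?_⟩
  intro z g h _ hg hgz _ hh hh₁ ε hε _
  have hn₀ x : 0 ≤ 1 - g x * h (x - z) := by
    nlinarith [hg x, hh (x - z)]
  have hf₀ x : 0 ≤ (1 - g x * h (x - z)) * ε ^ N / (ε ^ 2 + ‖x - z‖ ^ 2) ^ N := by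
    have := hn₀ x
    positivity
  have hfK : ∀ᵐ x, (1 - g x * h (x - z)) * ε ^ N / (ε ^ 2 + ‖x - z‖ ^ 2) ^ N ≤
      ε ^ N * K (x - z) := by
    filter_upwards [compl_mem_ae_iff.2 (measure_singleton z)] with x hx
    refine mul_div_add_sq_pow_le_bubbleMajorant N hε.le (norm_sub_pos_iff.2 hx) (hn₀ x)
      (by nlinarith [hg x, hh (x - z)]) fun hxz => ?_
    rw [hh₁ _ hxz, mul_one]
    linarith [hgz x hxz]
  refine ⟨integral_nonneg hf₀, ?_⟩
  calc _ ≤ ∫ x, ε ^ N * K (x - z) :=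
        integral_mono_of_nonneg (.of_forall hf₀) ((hK.comp_sub_right z).const_mul _) hfK
    _ = (∫ y, K y) * ε ^ N := by rw [integral_const_mul, integral_sub_right_eq_self, mul_comm]
    _ ≤ _ := by gcongr; linarith
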